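/- For n = 2^{m-2} + 1 with m ≥ 2 and uniform input distribution Π = (1/n)·I, there is no subset 𝒰 ⊆ ℝ^{n×m} of utility matrices such that for all channels C, C̄ ∈ ℝ^{m×n}: (C̄ is a Shannon-garbling of C) if and only if (for all U ∈ 𝒰, max over D ∈ Φ(C) of tr(U·D·Π) ≥ max over D ∈ Φ(C̄) of tr(U·D·Π)). -/

import Mathlib

open Matrix BigOperators

def ColStoch {m n : ℕ} (A : Matrix (Fin m) (Fin n) ℝ) : Prop :=
  (∀ i j, 0 ≤ A i j) ∧ ∀ j, ∑ i, A i j = 1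

/-!
For a fixed utility `U`, the relation "`C` is at least as useful as `Cbar`" survives replacing
`Cbar` by the average of two channels it dominates: `tr(U Abar Cbar Π)` is affine in `Cbar`, so
the better of the two responses `A` serves the average. So every utility-defined order makes the
channels below `C` a midpoint-convex set, and it suffices to find a channel whose Shannon
garblings are not closed under averaging. For `m = n = 2` the first rows of the garblings of
`!![0, 1/2; 1, 1/2]` lie on segments too short to carry the row `(1/4, 3/4)`. For `m, n ≥ 3`, all
columns of a garbling of a channel with only two distinct columns lie on one segment, while the
average of two such garblings can have three affinely independent columns.
-/

lemma ColStoch.mem_Icc {m n : ℕ} {A : Matrix (Fin m) (Fin n) ℝ} (hA : ColStoch A) (i : Fin m)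
    (j : Fin n) : A i j ∈ Set.Icc 0 1 :=
  ⟨hA.1 i j, hA.2 j ▸ Finset.single_le_sum (fun k _ => hA.1 k j) (Finset.mem_univ i)⟩

lemma ColStoch.mul {a b c : ℕ} {A : Matrix (Fin a) (Fin b) ℝ} {B : Matrix (Fin b) (Fin c) ℝ}
    (hA : ColStoch A) (hB : ColStoch B) : ColStoch (A * B) := by
  refine ⟨fun i j => ?_, fun j => ?_⟩
  · rw [mul_apply]
    exact Finset.sum_nonneg fun k _ => mul_nonneg (hA.1 i k) (hB.1 k j)
  · simp only [mul_apply]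
    rw [Finset.sum_comm]
    simp only [← Finset.sum_mul, hA.2, one_mul, hB.2 j]

lemma colStoch_one {k : ℕ} : ColStoch (1 : Matrix (Fin k) (Fin k) ℝ) :=
  ⟨fun i j => by by_cases h : i = j <;> simp [one_apply, h], fun j => by simp [one_apply]⟩

lemma ColStoch.midpoint {m n : ℕ} {B₁ B₂ : Matrix (Fin m) (Fin n) ℝ}
    (h₁ : ColStoch B₁) (h₂ : ColStoch B₂) : ColStoch ((2 : ℝ)⁻¹ • (B₁ + B₂)) := by
  refine ⟨fun i j => ?_, fun j => ?_⟩
  · simpa using add_nonneg (h₁.1 i j) (h₂.1 i j)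
  · simp only [Matrix.smul_apply, Matrix.add_apply, smul_eq_mul, ← Finset.mul_sum,
      Finset.sum_add_distrib, h₁.2 j, h₂.2 j]
    norm_num

def detChannel {a b : ℕ} (f : Fin b → Fin a) : Matrix (Fin a) (Fin b) ℝ :=
  of fun i j => if i = f j then 1 else 0

@[simp]
lemma detChannel_apply {a b : ℕ} (f : Fin b → Fin a) (i : Fin a) (j : Fin b) :
    detChannel f i j = if i = f j then 1 else 0 :=
  of_apply _ _ _

lemma colStoch_detChannel {a b : ℕ} (f : Fin b → Fin a) : ColStoch (detChannel f) :=
  ⟨fun i j => by by_cases h : i = f j <;> simp [h], fun j => by simp⟩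

lemma mul_detChannel_apply {a b c : ℕ} (W : Matrix (Fin a) (Fin b) ℝ) (f : Fin c → Fin b)
    (i : Fin a) (j : Fin c) : (W * detChannel f) i j = W i (f j) := by
  simp [mul_apply]

lemma detChannel_mul_detChannel {a b c : ℕ} (f : Fin b → Fin a) (g : Fin c → Fin b) :
    detChannel f * detChannel g = detChannel (f ∘ g) := by
  ext i j
  rw [mul_detChannel_apply]
  rfl

lemma mul_detChannel_update_mul_apply {m n : ℕ} (M : Matrix (Fin m) (Fin m) ℝ)
    {N : Matrix (Fin n) (Fin n) ℝ} (hN : ColStoch N) (i₀ i₁ : Fin m) (j₀ : Fin n)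
    (i : Fin m) (j : Fin n) :
    (M * detChannel (Function.update (fun _ => i₁) j₀ i₀) * N) i j
      = N j₀ j * M i i₀ + (1 - N j₀ j) * M i i₁ := by
  have hsplit : ∀ l, (M * detChannel (Function.update (fun _ => i₁) j₀ i₀)) i l * N l j
      = M i i₁ * N l j + if l = j₀ then (M i i₀ - M i i₁) * N l j else 0 := by
    intro l
    rw [mul_detChannel_apply]
    by_cases hl : l = j₀
    · rw [hl, Function.update_self, if_pos rfl]
      ring
    · simp [hl]
  rw [mul_apply, Finset.sum_congr rfl fun l _ => hsplit l, Finset.sum_add_distrib,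
    ← Finset.mul_sum, hN.2 j, Finset.sum_ite_eq']
  simp only [Finset.mem_univ, if_true]
  ring

def IsShannonGarbling {m n : ℕ} (C Cbar : Matrix (Fin m) (Fin n) ℝ) : Prop :=
  ∃ (M : Matrix (Fin m) (Fin m) ℝ) (N : Matrix (Fin n) (Fin n) ℝ),
    ColStoch M ∧ ColStoch N ∧ Cbar = M * C * N

lemma isShannonGarbling_mul_left {m n : ℕ} {M : Matrix (Fin m) (Fin m) ℝ} (hM : ColStoch M)
    (C : Matrix (Fin m) (Fin n) ℝ) : IsShannonGarbling C (M * C) :=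
  ⟨M, 1, hM, colStoch_one, (Matrix.mul_one _).symm⟩

lemma isShannonGarbling_mul_right {m n : ℕ} {N : Matrix (Fin n) (Fin n) ℝ} (hN : ColStoch N)
    (C : Matrix (Fin m) (Fin n) ℝ) : IsShannonGarbling C (C * N) :=
  ⟨1, N, colStoch_one, hN, by rw [Matrix.one_mul]⟩

def ShannonOrderNonconvex (m n : ℕ) : Prop :=
  ∃ C B₁ B₂ : Matrix (Fin m) (Fin n) ℝ, ColStoch C ∧ ColStoch B₁ ∧ ColStoch B₂ ∧
    IsShannonGarbling C B₁ ∧ IsShannonGarbling C B₂ ∧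
    ¬ IsShannonGarbling C ((2 : ℝ)⁻¹ • (B₁ + B₂))

/-- The segment from `x` to `(x + y) / 2` has length `|x - y| / 2 ≤ 1/2`, and length `1/2` only
when it is `[0, 1/2]` or `[1/2, 1]`. -/
lemma not_mem_segment_to_midpoint {x y a b : ℝ} (hx : x ∈ Set.Icc (0 : ℝ) 1)
    (hy : y ∈ Set.Icc (0 : ℝ) 1) (ha : a ∈ Set.Icc (0 : ℝ) 1) (hb : b ∈ Set.Icc (0 : ℝ) 1)
    (h₁ : (1 - a) * x + a * ((x + y) / 2) = 1 / 4) (h₂ : (1 - b) * x + b * ((x + y) / 2) = 3 / 4) :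
    False := by
  obtain ⟨hx₀, hx₁⟩ := hx
  obtain ⟨hy₀, hy₁⟩ := hy
  obtain ⟨ha₀, ha₁⟩ := ha
  obtain ⟨hb₀, hb₁⟩ := hb
  nlinarith [mul_nonneg ha₀ hb₀, mul_nonneg (sub_nonneg.2 ha₁) (sub_nonneg.2 hb₁),
    mul_nonneg ha₀ (sub_nonneg.2 hb₁), mul_nonneg hb₀ (sub_nonneg.2 ha₁), mul_nonneg hx₀ hy₀,
    mul_nonneg (sub_nonneg.2 hx₁) (sub_nonneg.2 hy₁), mul_nonneg hx₀ (sub_nonneg.2 hy₁),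
    mul_nonneg hy₀ (sub_nonneg.2 hx₁)]

lemma shannonOrderNonconvex_two_two : ShannonOrderNonconvex 2 2 := by
  set P : Matrix (Fin 2) (Fin 2) ℝ := detChannel ![1, 0]
  have hP : ColStoch P := colStoch_detChannel _
  set C : Matrix (Fin 2) (Fin 2) ℝ := !![0, 1/2; 1, 1/2]
  have hC : ColStoch C := ⟨fun i j => by fin_cases i <;> fin_cases j <;> norm_num [C],
    fun j => by fin_cases j <;> norm_num [C]⟩
  refine ⟨C, P * C * P, C, hC, (hP.mul hC).mul hP, hC, ⟨P, P, hP, hP, rfl⟩,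
    ⟨1, 1, colStoch_one, colStoch_one, by simp⟩, ?_⟩
  rintro ⟨M, N, hM, hN, hB⟩
  have hmid : ((2 : ℝ)⁻¹ • (P * C * P + C)) 0 0 = 1 / 4 ∧
      ((2 : ℝ)⁻¹ • (P * C * P + C)) 0 1 = 3 / 4 := by
    norm_num [P, C, mul_apply, Fin.sum_univ_two]
  have entry (j : Fin 2) :
      (M * C * N) 0 j = (1 - N 1 j) * M 0 1 + N 1 j * ((M 0 1 + M 0 0) / 2) := by
    have hcol : N 0 j = 1 - N 1 j := by linarith [hN.2 j, Fin.sum_univ_two (fun i => N i j)]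
    simp only [mul_apply, Fin.sum_univ_two, hcol, C, of_apply, cons_val', cons_val_zero,
      cons_val_one, cons_val_fin_one]
    ring
  rw [hB] at hmid
  exact not_mem_segment_to_midpoint (hM.mem_Icc 0 1) (hM.mem_Icc 0 0) (hN.mem_Icc 1 0)
    (hN.mem_Icc 1 1) (entry 0 ▸ hmid.1) (entry 1 ▸ hmid.2)

/-- The midpoint `B` has the columns `(e₀ + e₁) / 2, (e₀ + e₂) / 2, (e₁ + e₂) / 2` at `j₀, j₁, j₂`
(with `eₖ` the unit vector at `iₖ`). -/
lemma shannonOrderNonconvex_of_three_le {m n : ℕ} (hm : 3 ≤ m) (hn : 3 ≤ n) :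
    ShannonOrderNonconvex m n := by
  obtain ⟨i₀, i₁, i₂, hi₀₁, hi₀₂, hi₁₂⟩ :=
    (Fintype.two_lt_card_iff (α := Fin m)).1 (by rw [Fintype.card_fin]; omega)
  obtain ⟨j₀, j₁, j₂, hj₀₁, hj₀₂, hj₁₂⟩ :=
    (Fintype.two_lt_card_iff (α := Fin n)).1 (by rw [Fintype.card_fin]; omega)
  set c : Fin n → Fin m := Function.update (fun _ => i₁) j₀ i₀
  set g : Fin m → Fin m := Function.update (fun _ => i₂) i₀ i₀
  set σ := Equiv.swap j₀ j₁
  have hC := colStoch_detChannel c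
  refine ⟨detChannel c, detChannel c * detChannel σ, detChannel g * detChannel c, hC,
    hC.mul (colStoch_detChannel σ), (colStoch_detChannel g).mul hC,
    isShannonGarbling_mul_right (colStoch_detChannel σ) _,
    isShannonGarbling_mul_left (colStoch_detChannel g) _, ?_⟩
  set B := (2 : ℝ)⁻¹ • (detChannel c * detChannel σ + detChannel g * detChannel c)
  have hmid : B i₀ j₀ = 2⁻¹ ∧ B i₀ j₁ = 2⁻¹ ∧ B i₀ j₂ = 0 ∧ B i₁ j₀ = 2⁻¹ ∧ B i₁ j₁ = 0 := by
    simp [B, detChannel_mul_detChannel, c, g, σ, Equiv.swap_apply_of_ne_of_ne, hi₀₁, hi₀₂, hi₁₂,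
      hi₀₁.symm, hj₀₁.symm, hj₀₂.symm, hj₁₂.symm]
  obtain ⟨h₀₀, h₀₁, h₀₂, h₁₀, h₁₁⟩ := hmid
  rintro ⟨M, N, -, hN, hB⟩
  have entry (i j) : B i j = N j₀ j * M i i₀ + (1 - N j₀ j) * M i i₁ := by
    rw [hB]
    exact mul_detChannel_update_mul_apply M hN i₀ i₁ j₀ i j
  have hslope : (N j₀ j₀ - N j₀ j₁) * (M i₁ i₀ - M i₁ i₁) = 2⁻¹ := by
    linear_combination entry i₁ j₁ - entry i₁ j₀ - h₁₁ + h₁₀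
  have hflat : (N j₀ j₀ - N j₀ j₁) * (M i₀ i₀ - M i₀ i₁) = 0 := by
    linear_combination entry i₀ j₁ - entry i₀ j₀ - h₀₁ + h₀₀
  have ht : N j₀ j₀ - N j₀ j₁ ≠ 0 := left_ne_zero_of_mul (by rw [hslope]; norm_num)
  have hrow : M i₀ i₀ - M i₀ i₁ = 0 := (mul_eq_zero.1 hflat).resolve_left ht
  have : (2 : ℝ)⁻¹ = 0 := by
    linear_combination entry i₀ j₀ - h₀₀ + h₀₂ - entry i₀ j₂ + (N j₀ j₀ - N j₀ j₂) * hrow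
  norm_num at this

/-- `max_{D ∈ Φ(C)} tr(U D Π) ≥ max_{D ∈ Φ(Cbar)} tr(U D Π)`, with both maxima unfolded. -/
def IsMoreUsefulFor {m n : ℕ} (U : Matrix (Fin n) (Fin m) ℝ) (Pi : Matrix (Fin n) (Fin n) ℝ)
    (C Cbar : Matrix (Fin m) (Fin n) ℝ) : Prop :=
  ∀ Abar : Matrix (Fin m) (Fin m) ℝ, ColStoch Abar →
    ∃ A : Matrix (Fin m) (Fin m) ℝ, ColStoch A ∧
      (U * (A * C) * Pi).trace ≥ (U * (Abar * Cbar) * Pi).trace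

lemma IsMoreUsefulFor.midpoint {m n : ℕ} {U : Matrix (Fin n) (Fin m) ℝ}
    {Pi : Matrix (Fin n) (Fin n) ℝ} {C B₁ B₂ : Matrix (Fin m) (Fin n) ℝ}
    (h₁ : IsMoreUsefulFor U Pi C B₁) (h₂ : IsMoreUsefulFor U Pi C B₂) :
    IsMoreUsefulFor U Pi C ((2 : ℝ)⁻¹ • (B₁ + B₂)) := by
  intro Abar hAbar
  obtain ⟨A₁, hA₁, h₁⟩ := h₁ Abar hAbar
  obtain ⟨A₂, hA₂, h₂⟩ := h₂ Abar hAbar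
  have hlin : (U * (Abar * ((2 : ℝ)⁻¹ • (B₁ + B₂))) * Pi).trace
      = 2⁻¹ * (U * (Abar * B₁) * Pi).trace + 2⁻¹ * (U * (Abar * B₂) * Pi).trace := by
    simp only [Matrix.mul_smul, Matrix.smul_mul, Matrix.mul_add, Matrix.add_mul, trace_smul,
      trace_add, smul_eq_mul, mul_add]
  rw [ge_iff_le] at h₁ h₂
  rcases le_total (U * (A₁ * C) * Pi).trace (U * (A₂ * C) * Pi).trace with h | h
  · exact ⟨A₂, hA₂, by rw [ge_iff_le, hlin]; linarith⟩
  · exact ⟨A₁, hA₁, by rw [ge_iff_le, hlin]; linarith⟩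

theorem not_exists_utility_set_of_shannonOrderNonconvex {m n : ℕ} (h : ShannonOrderNonconvex m n)
    (Pi : Matrix (Fin n) (Fin n) ℝ) :
    ¬ ∃ 𝒰 : Set (Matrix (Fin n) (Fin m) ℝ), ∀ C Cbar : Matrix (Fin m) (Fin n) ℝ,
      ColStoch C → ColStoch Cbar →
        (IsShannonGarbling C Cbar ↔ ∀ U ∈ 𝒰, IsMoreUsefulFor U Pi C Cbar) := by
  rintro ⟨𝒰, h𝒰⟩
  obtain ⟨C, B₁, B₂, hC, hB₁, hB₂, hg₁, hg₂, hng⟩ := h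
  refine hng ((h𝒰 C _ hC (hB₁.midpoint hB₂)).2 fun U hU => ?_)
  exact ((h𝒰 C B₁ hC hB₁).1 hg₁ U hU).midpoint ((h𝒰 C B₂ hC hB₂).1 hg₂ U hU)

/-- Theorem 2: for `n = 2^(m-2) + 1`, `m ≥ 2`, no subset of utility matrices makes
reduced Blackwell-usefulness equivalent to the Shannon-order. -/
theorem no_utility_set_general (m : ℕ) (hm : 2 ≤ m) :
    let n : ℕ := 2 ^ (m - 2) + 1
    let Pi : Matrix (Fin n) (Fin n) ℝ := (n : ℝ)⁻¹ • (1 : Matrix (Fin n) (Fin n) ℝ)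
    ¬ ∃ 𝒰 : Set (Matrix (Fin n) (Fin m) ℝ),
      ∀ C Cbar : Matrix (Fin m) (Fin n) ℝ, ColStoch C → ColStoch Cbar →
        ((∃ (M : Matrix (Fin m) (Fin m) ℝ) (N : Matrix (Fin n) (Fin n) ℝ),
            ColStoch M ∧ ColStoch N ∧ Cbar = M * C * N)
          ↔
         (∀ U ∈ 𝒰, ∀ Abar : Matrix (Fin m) (Fin m) ℝ, ColStoch Abar →
            ∃ A : Matrix (Fin m) (Fin m) ℝ, ColStoch A ∧
              (U * (A * C) * Pi).trace ≥ (U * (Abar * Cbar) * Pi).trace)) := by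
  intro n Pi
  refine not_exists_utility_set_of_shannonOrderNonconvex ?_ Pi
  rcases hm.eq_or_lt with rfl | hm
  · exact shannonOrderNonconvex_two_two
  · refine shannonOrderNonconvex_of_three_le hm ?_
    have : 2 ≤ 2 ^ (m - 2) := Nat.le_self_pow (by omega) 2
    show 3 ≤ 2 ^ (m - 2) + 1
    omega
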